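/- Let G be a cubic (3-regular) finite simple graph and H its line graph. If H admits an in-out-proper orientation with all absolute in-out-degrees at most 2, then G admits a proper edge coloring with 3 colors. -/

import Mathlib

/-!
In a `d`-regular graph an orientation with in-degree `i` at `v` has out-degree `d - i` there,
so the in-out-degree of `v` is `2 i - d`. The line graph of a cubic graph is `4`-regular, so the
bound `|2 i - 4| ≤ 2` leaves `i ∈ {1, 2, 3}`, and in-out-properness says exactly that adjacent
vertices receive different values of `i`: the in-degree is a proper `3`-colouring of the line
graph, i.e. a proper edge `3`-colouring of the graph.
-/

/-- An orientation of a simple graph `G`: for each edge `{u,v}` exactly one of the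
two directions is chosen. `dir u v = true` means the arc goes from `u` to `v`. -/
structure Orient {V : Type*} (G : SimpleGraph V) where
  dir : V → V → Bool
  consistent : ∀ u v, G.Adj u v → dir u v = !dir v u

variable {V : Type*}

/-- In-degree of `v` in the orientation `D`. -/
def inDeg [Fintype V] (G : SimpleGraph V) [DecidableRel G.Adj] (D : Orient G) (v : V) : ℕ :=
  (Finset.univ.filter (fun u => G.Adj u v ∧ D.dir u v = true)).card

/-- Out-degree of `v` in the orientation `D`. -/
def outDeg [Fintype V] (G : SimpleGraph V) [DecidableRel G.Adj] (D : Orient G) (v : V) : ℕ :=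
  (Finset.univ.filter (fun u => G.Adj u v ∧ D.dir v u = true)).card

/-- In-out-degree `d_D^±(v) = d_D^-(v) - d_D^+(v)`. -/
def ioDeg [Fintype V] (G : SimpleGraph V) [DecidableRel G.Adj] (D : Orient G) (v : V) : ℤ :=
  (inDeg G D v : ℤ) - (outDeg G D v : ℤ)

/-- An orientation is in-out-proper if adjacent vertices have distinct in-out-degrees. -/
def IsIOProper [Fintype V] (G : SimpleGraph V) [DecidableRel G.Adj] (D : Orient G) : Prop :=
  ∀ u v, G.Adj u v → ioDeg G D u ≠ ioDeg G D v

open Finset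

section Orientation

variable [Fintype V] {G : SimpleGraph V} [DecidableRel G.Adj] (D : Orient G)

lemma inDeg_add_outDeg (v : V) : inDeg G D v + outDeg G D v = G.degree v := by
  rw [← G.card_neighborFinset_eq_degree,
    ← card_filter_add_card_filter_not (s := G.neighborFinset v) (fun u => D.dir u v = true),
    inDeg, outDeg, G.neighborFinset_eq_filter, filter_filter, filter_filter]
  congr 2 <;> ext u
  · simp [G.adj_comm]
  · simp only [mem_filter, mem_univ, true_and, G.adj_comm v u]
    exact and_congr_right fun h => by simp [D.consistent u v h]

lemma ioDeg_eq_two_mul_inDeg_sub_degree (v : V) :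
    ioDeg G D v = 2 * inDeg G D v - G.degree v := by
  rw [ioDeg, ← inDeg_add_outDeg D v]
  push_cast
  ring

variable {D}

lemma IsIOProper.inDeg_ne {d : ℕ} (hD : IsIOProper G D) (hG : G.IsRegularOfDegree d) {u v : V}
    (h : G.Adj u v) : inDeg G D u ≠ inDeg G D v := fun heq =>
  hD u v h <| by
    rw [ioDeg_eq_two_mul_inDeg_sub_degree, ioDeg_eq_two_mul_inDeg_sub_degree, heq,
      hG.degree_eq, hG.degree_eq]

lemma IsIOProper.colorable_three (hG : G.IsRegularOfDegree 4) (hD : IsIOProper G D)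
    (hb : ∀ v, |ioDeg G D v| ≤ 2) : G.Colorable 3 := by
  have hrange : ∀ v, 1 ≤ inDeg G D v ∧ inDeg G D v ≤ 3 := fun v => by
    have := hb v
    rw [ioDeg_eq_two_mul_inDeg_sub_degree, hG.degree_eq, abs_le] at this
    omega
  refine ⟨.mk (fun v => ⟨inDeg G D v - 1, by grind⟩) fun {u v} h heq => hD.inDeg_ne hG h ?_⟩
  have := congrArg Fin.val heq
  grind

end Orientation

namespace SimpleGraph

variable {G : SimpleGraph V}

lemma map_subtype_lineGraph_neighborFinset [Fintype V] [DecidableEq V] [DecidableRel G.Adj]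
    [DecidableRel G.lineGraph.Adj] {u v : V} (h : G.Adj u v) :
    (G.lineGraph.neighborFinset ⟨s(u, v), h⟩).map (Function.Embedding.subtype _) =
      (G.incidenceFinset u ∪ G.incidenceFinset v).erase s(u, v) := by
  ext e
  simp only [Finset.mem_map, Subtype.exists, Function.Embedding.coe_subtype, exists_and_right,
    exists_eq_right, mem_neighborFinset, lineGraph_adj_iff_exists, ne_eq, Sym2.mem_iff,
    Finset.mem_erase, Finset.mem_union, mem_incidenceFinset, incidenceSet, Set.mem_sep_iff]
  grind

lemma lineGraph_degree_add_two [Fintype V] [DecidableRel G.Adj] [DecidableRel G.lineGraph.Adj]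
    {u v : V} (h : G.Adj u v) :
    G.lineGraph.degree ⟨s(u, v), h⟩ + 2 = G.degree u + G.degree v := by
  classical
  have hmem : s(u, v) ∈ G.incidenceFinset u ∪ G.incidenceFinset v :=
    Finset.mem_union_left _ ((G.mem_incidenceFinset _ _).2 (G.mk'_mem_incidenceSet_left_iff.2 h))
  have hinter : G.incidenceFinset u ∩ G.incidenceFinset v = {s(u, v)} := by
    apply Finset.coe_injective
    simp only [Finset.coe_inter, coe_incidenceFinset, Finset.coe_singleton]
    exact G.incidenceSet_inter_incidenceSet_of_adj h
  have hunion := Finset.card_union_add_card_inter (G.incidenceFinset u) (G.incidenceFinset v)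
  rw [hinter, Finset.card_singleton, card_incidenceFinset_eq_degree,
    card_incidenceFinset_eq_degree] at hunion
  have hpos := Finset.card_pos.2 ⟨_, hmem⟩
  rw [← card_neighborFinset_eq_degree, ← Finset.card_map (Function.Embedding.subtype _),
    map_subtype_lineGraph_neighborFinset, Finset.card_erase_of_mem hmem]
  omega

theorem IsRegularOfDegree.lineGraph [Fintype V] [DecidableRel G.Adj]
    [DecidableRel G.lineGraph.Adj] {k : ℕ} (hG : G.IsRegularOfDegree k) :
    G.lineGraph.IsRegularOfDegree (2 * k - 2) := by
  rintro ⟨e, he⟩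
  induction e using Sym2.ind with
  | _ u v =>
    rw [two_mul]
    nth_rw 1 [← hG.degree_eq u, ← hG.degree_eq v]
    exact Nat.eq_sub_of_add_eq (lineGraph_degree_add_two he)

end SimpleGraph

theorem stmt_19_general [Fintype V] (G : SimpleGraph V) [DecidableRel G.Adj]
    (hcubic : ∀ v, G.degree v = 3)
    [DecidableRel G.lineGraph.Adj]
    (D : Orient G.lineGraph) (hD : IsIOProper G.lineGraph D)
    (hb : ∀ e, |ioDeg G.lineGraph D e| ≤ 2) :
    ∃ f : G.edgeSet → Fin 3, ∀ e e', G.lineGraph.Adj e e' → f e ≠ f e' := by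
  obtain ⟨C⟩ := hD.colorable_three (SimpleGraph.IsRegularOfDegree.lineGraph hcubic) hb
  exact ⟨C, fun _ _ h => C.valid h⟩

/-- If the line graph of a cubic graph `G` has an in-out-proper orientation with all
absolute in-out-degrees at most 2, then `G` has a proper edge 3-coloring. -/
theorem stmt_19 [Fintype V] [DecidableEq V] (G : SimpleGraph V) [DecidableRel G.Adj]
    (hcubic : ∀ v, G.degree v = 3)
    [DecidableRel G.lineGraph.Adj]
    (D : Orient G.lineGraph) (hD : IsIOProper G.lineGraph D)
    (hb : ∀ e, |ioDeg G.lineGraph D e| ≤ 2) :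
    ∃ f : G.edgeSet → Fin 3, ∀ e e', G.lineGraph.Adj e e' → f e ≠ f e' :=
  stmt_19_general G hcubic D hD hb
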